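/- arXiv:1804.10057 — 6 statements merged into one kernel-verified Lean document; each statement's English description precedes it below -/
import Mathlib

section
/- The composite of two idempotent full contractions of [n] need not be idempotent when n ≥ 4: there exist idempotents ε, τ in CT_4 such that ετ is not idempotent. Concretely, ε defined by 1ε=1, 2ε=3ε=4ε=2 and τ defined by 1τ=3τ=3, 2τ=4τ=2 are idempotent contractions of {1,2,3,4}, but ετ is not idempotent. -/
/-- A full transformation of the chain `Fin n` is a contraction if it does not
increase distances. -/
def IsContraction {n : ℕ} (α : Fin n → Fin n) : Prop :=
  ∀ x y : Fin n, |(α x : ℤ) - (α y : ℤ)| ≤ |(x : ℤ) - (y : ℤ)|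

instance {n : ℕ} : DecidablePred (IsContraction (n := n)) :=
  fun _ => inferInstanceAs (Decidable (∀ _ _, _))

/-- Here `Fin 4 = {0,1,2,3}` represents `{1,2,3,4}`, and transformations act on the right,
so the product `ετ` is `τ ∘ ε`. -/
theorem product_of_idempotent_contractions_not_idempotent :
    ∃ ε τ : Fin 4 → Fin 4,
      ε = ![0, 1, 1, 1] ∧ τ = ![2, 1, 2, 1] ∧
      IsContraction ε ∧ IsContraction τ ∧
      ε ∘ ε = ε ∧ τ ∘ τ = τ ∧
      ¬ ((τ ∘ ε) ∘ (τ ∘ ε) = τ ∘ ε) := by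
  refine ⟨![0, 1, 1, 1], ![2, 1, 2, 1], rfl, rfl, by decide, by decide, by decide, by decide, ?_⟩
  -- `ετ` sends `1 ↦ 3`, but `(ετ)²` sends `1 ↦ 2`.
  exact fun h => absurd (congrFun h 0) (by decide)
end

section
/- A full contraction α of [n] is a regular element of the semigroup CT_n (i.e., there exists a full contraction β with α = αβα) if and only if the kernel partition of α admits a convex transversal, that is, a convex subset T of [n] meeting each kernel class of α in exactly one point. -/
/-!
If `α = αβα`, then `βα` is a contraction, so its image is convex (a contraction of a chain moves
in steps of at most one and therefore skips no value), and it meets every kernel class of `α`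
exactly once, in `βα x`.

Conversely, on a convex transversal `T` the map `α` is injective and moves in steps of at most one,
so its steps are `±1`, and two consecutive steps cannot cancel: `α` is an isometry from `T` onto
the interval `range α`. Its inverse, precomposed with the clamp of `Fin n` onto that interval,
is a contraction `β` with `αβα = α`.
-/

open Set

def IsKernelTransversal {α β : Type*} (f : α → β) (T : Set α) : Prop :=
  ∀ x, ∃! t, t ∈ T ∧ f t = f x

namespace IsKernelTransversal

variable {α β : Type*} {f : α → β} {T : Set α}

theorem injOn (hT : IsKernelTransversal f T) : T.InjOn f := fun _ ht t' ht' h =>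
  (hT t').unique ⟨ht, h⟩ ⟨ht', rfl⟩

theorem exists_mem_eq (hT : IsKernelTransversal f T) (x : α) : ∃ t ∈ T, f t = f x :=
  (hT x).exists

end IsKernelTransversal

theorem isKernelTransversal_range_comp {α β : Type*} {f : α → β} {g : β → α}
    (h : f ∘ g ∘ f = f) : IsKernelTransversal f (range (g ∘ f)) := by
  have hfix : ∀ x, f (g (f x)) = f x := congrFun h
  refine fun x => ⟨g (f x), ⟨mem_range_self x, hfix x⟩, ?_⟩
  rintro _ ⟨⟨u, rfl⟩, hu⟩
  simp only [Function.comp_apply] at hu ⊢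
  rw [← hfix u, hu]

theorem Set.OrdConnected.exists_contraction_retraction {n : ℕ} {S : Set (Fin n)}
    (hS : S.OrdConnected) (hne : S.Nonempty) :
    ∃ r : Fin n → Fin n, IsContraction r ∧ (∀ y, r y ∈ S) ∧ ∀ s ∈ S, r s = s := by
  obtain ⟨a, ha, hmin⟩ : ∃ a ∈ S, ∀ s ∈ S, a ≤ s := S.exists_min_image id S.toFinite hne
  obtain ⟨b, hb, hmax⟩ : ∃ b ∈ S, ∀ s ∈ S, s ≤ b := S.exists_max_image id S.toFinite hne
  refine ⟨fun y => max a (min b y), fun x y => ?_, fun y => ?_, fun s hs => ?_⟩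
  · have := le_abs_self ((x : ℤ) - y)
    have := neg_abs_le ((x : ℤ) - y)
    simp only [Fin.coe_max, Fin.coe_min, abs_le]
    omega
  · exact hS.out ha hb ⟨le_max_left _ _, max_le (hmin b hb) (min_le_left _ _)⟩
  · simp only [min_eq_right (hmax s hs), max_eq_right (hmin s hs)]

namespace IsContraction

variable {n : ℕ} {f g : Fin n → Fin n}

theorem comp (hf : IsContraction f) (hg : IsContraction g) : IsContraction (f ∘ g) :=
  fun x y => (hf (g x) (g y)).trans (hg x y)

theorem abs_sub_le_one (hf : IsContraction f) {x y : Fin n} (h : (x : ℕ) = y + 1) :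
    |(f x : ℤ) - f y| ≤ 1 := by
  simpa [show (x : ℤ) - y = 1 by omega] using hf x y

theorem mem_range_of_mem_uIcc (hf : IsContraction f) (u v : Fin n) {c : Fin n}
    (hc : c ∈ uIcc (f u) (f v)) : c ∈ range f := by
  wlog huv : u ≤ v generalizing u v
  · exact this v u (uIcc_comm (f u) (f v) ▸ hc) (le_of_not_ge huv)
  obtain ⟨k, hk⟩ : ∃ k, (v : ℕ) = u + k := ⟨v - u, by rw [Fin.le_def] at huv; omega⟩
  clear huv
  induction k generalizing v with
  | zero =>
    rw [show v = u from Fin.ext hk, uIcc_self, mem_singleton_iff] at hc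
    exact ⟨u, hc.symm⟩
  | succ k ih =>
    let w : Fin n := ⟨u + k, by omega⟩
    rcases uIcc_subset_uIcc_union_uIcc (b := f w) hc with h | h
    · exact ih w h rfl
    · have hstep := abs_le.mp (hf.abs_sub_le_one (x := v) (y := w) hk)
      have : c = f w ∨ c = f v := by
        rw [mem_uIcc] at h
        simp only [Fin.le_def, Fin.ext_iff] at h ⊢
        omega
      rcases this with rfl | rfl <;> exact mem_range_self _

theorem ordConnected_range (hf : IsContraction f) : (range f).OrdConnected :=
  ⟨by
    rintro _ ⟨u, rfl⟩ _ ⟨v, rfl⟩ c hc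
    exact hf.mem_range_of_mem_uIcc u v (Icc_subset_uIcc hc)⟩

theorem abs_sub_eq_of_injOn_of_val_eq_add (hf : IsContraction f) {T : Set (Fin n)}
    (hT : T.OrdConnected) (hinj : T.InjOn f) {t : Fin n} (ht : t ∈ T) (k : ℕ) :
    ∀ t' ∈ T, (t' : ℕ) = t + k → |(f t' : ℤ) - f t| = k := by
  have hne : ∀ {a b : Fin n}, a ∈ T → b ∈ T → (a : ℕ) ≠ b → (f a : ℤ) ≠ f b :=
    fun ha hb hab h => hab (congrArg Fin.val (hinj ha hb (Fin.ext (by exact_mod_cast h))))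
  induction k using Nat.twoStepInduction with
  | zero =>
    intro t' _ h
    simp [show t' = t from Fin.ext h]
  | one =>
    intro t' ht' h
    have := abs_le.mp (hf.abs_sub_le_one h)
    have := hne ht' ht (by omega)
    rw [abs_eq (by norm_num)]
    omega
  | more k ih₀ ih₁ =>
    intro t' ht' h
    let u : Fin n := ⟨t + k, by omega⟩
    let v : Fin n := ⟨t + (k + 1), by omega⟩
    have hu : u ∈ T := hT.out ht ht' ⟨by simp [u, Fin.le_def], by simp [u, Fin.le_def]; omega⟩
    have hv : v ∈ T := hT.out ht ht' ⟨by simp [v, Fin.le_def], by simp [v, Fin.le_def]; omega⟩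
    have hfu := ih₀ u hu rfl
    have hfv := ih₁ v hv rfl
    have := abs_le.mp (hf.abs_sub_le_one (x := v) (y := u) rfl)
    have := abs_le.mp (hf.abs_sub_le_one (x := t') (y := v) (by simp [v]; omega))
    have := hne ht' hu (by simp [u]; omega)
    have := hne ht' hv (by simp [v]; omega)
    rw [abs_eq (by positivity)] at hfu hfv ⊢
    push_cast at hfu hfv ⊢
    omega

theorem abs_sub_eq_of_injOn (hf : IsContraction f) {T : Set (Fin n)} (hT : T.OrdConnected)
    (hinj : T.InjOn f) {t t' : Fin n} (ht : t ∈ T) (ht' : t' ∈ T) :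
    |(f t : ℤ) - f t'| = |(t : ℤ) - t'| := by
  wlog htt' : t ≤ t' generalizing t t'
  · rw [abs_sub_comm, this ht' ht (le_of_not_ge htt'), abs_sub_comm]
  rw [Fin.le_def] at htt'
  rw [abs_sub_comm, hf.abs_sub_eq_of_injOn_of_val_eq_add hT hinj ht (t' - t) t' ht' (by omega),
    abs_sub_comm, abs_of_nonneg (by omega : (0 : ℤ) ≤ t' - t)]
  omega

end IsContraction

theorem IsKernelTransversal.exists_contraction_comp_comp_eq {n : ℕ} {α : Fin n → Fin n}
    {T : Set (Fin n)} (hT : IsKernelTransversal α T) (hTconv : T.OrdConnected)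
    (hα : IsContraction α) : ∃ β, IsContraction β ∧ α ∘ β ∘ α = α := by
  rcases (range α).eq_empty_or_nonempty with h | hne
  · have : IsEmpty (Fin n) := range_eq_empty_iff.mp h
    exact ⟨α, hα, funext isEmptyElim⟩
  obtain ⟨r, hr, hrα, hrfix⟩ := hα.ordConnected_range.exists_contraction_retraction hne
  have hsection : ∀ z, ∃ t, z ∈ range α → t ∈ T ∧ α t = z := by
    intro z
    by_cases hz : z ∈ range α
    · obtain ⟨x, rfl⟩ := hz
      obtain ⟨t, ht, htx⟩ := hT.exists_mem_eq x
      exact ⟨t, fun _ => ⟨ht, htx⟩⟩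
    · exact ⟨z, fun h => absurd h hz⟩
  choose s hs using hsection
  refine ⟨s ∘ r, fun y y' => ?_, funext fun x => ?_⟩
  · obtain ⟨hsT, hαs⟩ := hs _ (hrα y)
    obtain ⟨hsT', hαs'⟩ := hs _ (hrα y')
    calc |(s (r y) : ℤ) - s (r y')| = |(α (s (r y)) : ℤ) - α (s (r y'))| :=
          (hα.abs_sub_eq_of_injOn hTconv hT.injOn hsT hsT').symm
      _ = |(r y : ℤ) - r y'| := by rw [hαs, hαs']
      _ ≤ |(y : ℤ) - y'| := hr y y'
  · simp only [Function.comp_apply, hrfix _ (mem_range_self x)]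
    exact (hs _ (mem_range_self x)).2

/-- A full contraction `α` is regular in `CT_n` (there is a contraction `β` with
`α = αβα`, reading products left-to-right, i.e. `α ∘ β ∘ α` as functions) iff the
kernel partition of `α` has a convex transversal: a convex set `T` meeting each
kernel class in exactly one point. -/
theorem regular_iff_convex_transversal {n : ℕ} (α : Fin n → Fin n)
    (hα : IsContraction α) :
    (∃ β : Fin n → Fin n, IsContraction β ∧ α ∘ β ∘ α = α) ↔
    ∃ T : Set (Fin n),
      (∀ a ∈ T, ∀ b ∈ T, ∀ c : Fin n, a ≤ c → c ≤ b → c ∈ T) ∧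
      (∀ x : Fin n, ∃! t : Fin n, t ∈ T ∧ α t = α x) := by
  constructor
  · rintro ⟨β, hβ, hαβα⟩
    exact ⟨range (β ∘ α), fun a ha b hb c hac hcb =>
      (hβ.comp hα).ordConnected_range.out ha hb ⟨hac, hcb⟩, isKernelTransversal_range_comp hαβα⟩
  · rintro ⟨T, hconv, hT⟩
    exact IsKernelTransversal.exists_contraction_comp_comp_eq hT
      ⟨fun a ha b hb c hc => hconv a ha b hb c hc.1 hc.2⟩ hα
end

section
/- Two full contractions α, β of [n] are R-related in the semigroup CT_n (i.e., generate the same principal right ideal: α CT_n^1 = β CT_n^1) if and only if ker α = ker β, where ker α = {(x,y) : xα = yα}. -/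
/-!
If `α = u ∘ β` then `ker β ⊆ ker α`, so `R`-related contractions have equal kernels. Conversely,
a contraction `β` of a chain takes every value between two of its values, and consecutive values
`t, t + 1` are taken at adjacent points. Hence, if `ker β ⊆ ker α` and `α` is a contraction,
`|xα - yα| ≤ |xβ - yβ|`: walk from `xβ` to `yβ` in unit steps. So `α` factors through the
retraction of `[n]` onto the interval `im β`, which is a contraction.
-/

theorem Fin.exists_abs_sub_le_one_and_closer {n : ℕ} {p y : Fin n} (hpy : p ≠ y) :
    ∃ q : Fin n, |(p : ℤ) - q| ≤ 1 ∧ |(q : ℤ) - y| < |(p : ℤ) - y| := by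
  rcases Nat.lt_or_gt_of_ne (Fin.val_ne_of_ne hpy) with hlt | hgt
  · refine ⟨⟨p + 1, by omega⟩, ?_, ?_⟩
    · simp
    · rw [abs_of_nonpos (by push_cast; omega), abs_of_neg (by omega)]
      push_cast; omega
  · refine ⟨⟨p - 1, by omega⟩, ?_, ?_⟩
    · rw [abs_le]; push_cast [Nat.cast_sub (by omega : 1 ≤ (p : ℕ))]; omega
    · rw [abs_of_nonneg (by push_cast; omega), abs_of_pos (by omega)]
      push_cast; omega

namespace IsContraction

variable {n : ℕ} {α β : Fin n → Fin n}

theorem exists_adjacent_eq_and_eq_add_one (hβ : IsContraction β) {x y : Fin n} {t : ℤ}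
    (hx : (β x : ℤ) ≤ t) (hy : t < β y) :
    ∃ p q : Fin n, (β p : ℤ) = t ∧ (β q : ℤ) = t + 1 ∧ |(p : ℤ) - q| ≤ 1 := by
  classical
  -- the point `p` with `β p ≤ t` closest to `y` has a neighbour towards `y` above `t`
  obtain ⟨p, hp, hmin⟩ := Finset.exists_min_image ({z | (β z : ℤ) ≤ t} : Finset (Fin n))
    (fun z => |(z : ℤ) - y|) ⟨x, by simpa using hx⟩
  simp only [Finset.mem_filter, Finset.mem_univ, true_and] at hp hmin
  have hpy : p ≠ y := by rintro rfl; omega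
  obtain ⟨q, hpq, hcloser⟩ := Fin.exists_abs_sub_le_one_and_closer hpy
  have hq : t < β q := by
    by_contra! hq
    exact (hmin q hq).not_gt hcloser
  have hβpq := abs_le.mp ((hβ p q).trans hpq)
  exact ⟨p, q, by omega, by omega, hpq⟩

theorem exists_eq_of_le_of_le (hβ : IsContraction β) {x y : Fin n} {t : ℤ}
    (hx : (β x : ℤ) ≤ t) (hy : t ≤ β y) : ∃ p : Fin n, (β p : ℤ) = t := by
  rcases hy.lt_or_eq with hy | rfl
  · obtain ⟨p, -, hp, -⟩ := hβ.exists_adjacent_eq_and_eq_add_one hx hy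
    exact ⟨p, hp⟩
  · exact ⟨y, rfl⟩

theorem exists_section (hβ : IsContraction β) :
    ∃ s : Fin n → Fin n, IsContraction (β ∘ s) ∧ β ∘ s ∘ β = β := by
  rcases isEmpty_or_nonempty (Fin n) with hn | hn
  · exact ⟨id, isEmptyElim, funext isEmptyElim⟩
  obtain ⟨xm, -, hm⟩ := Finset.exists_min_image Finset.univ (fun i => (β i : ℤ))
    Finset.univ_nonempty
  obtain ⟨xM, -, hM⟩ := Finset.exists_max_image Finset.univ (fun i => (β i : ℤ))
    Finset.univ_nonempty
  simp only [Finset.mem_univ, forall_const] at hm hM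
  -- `s t` is a preimage of `t` clamped to the interval `[min β, max β] = im β`
  have hclamp (t : Fin n) : ∃ p : Fin n, (β p : ℤ) = max (β xm : ℤ) (min (t : ℤ) (β xM)) :=
    hβ.exists_eq_of_le_of_le (le_max_left _ _) (max_le (hm xM) (min_le_right _ _))
  choose s hs using hclamp
  refine ⟨s, fun t t' => ?_, funext fun x => Fin.ext ?_⟩
  · have := le_abs_self ((t : ℤ) - t')
    have := neg_abs_le ((t : ℤ) - t')
    simp only [Function.comp_apply, hs, abs_le]
    omega
  · have := hs (β x)
    have := hm x
    have := hM x
    simp only [Function.comp_apply]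
    omega

theorem abs_sub_le_abs_sub_of_ker_le (hα : IsContraction α) (hβ : IsContraction β)
    (hker : ∀ x y, β x = β y → α x = α y) (x y : Fin n) :
    |(α x : ℤ) - α y| ≤ |(β x : ℤ) - β y| := by
  wlog hxy : (β x : ℤ) ≤ β y generalizing x y
  · rw [abs_sub_comm, abs_sub_comm (β x : ℤ)]
    exact this y x (le_of_not_ge hxy)
  have step (k : ℕ) : ∀ y, (β y : ℤ) = β x + k → |(α x : ℤ) - α y| ≤ k := by
    induction k with
    | zero =>
      intro y hy
      simp [hker x y (Fin.ext (by omega))]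
    | succ k ih =>
      intro y hy
      obtain ⟨p, q, hp, hq, hpq⟩ :=
        hβ.exists_adjacent_eq_and_eq_add_one (x := x) (y := y) (t := β x + k) (by omega)
          (by omega)
      have hqy : α q = α y := hker q y (Fin.ext (by omega))
      calc |(α x : ℤ) - α y| ≤ |(α x : ℤ) - α p| + |(α p : ℤ) - α q| := by
            rw [hqy]; exact abs_sub_le _ _ _
        _ ≤ k + 1 := add_le_add (ih p hp) ((hα p q).trans hpq)
        _ = (k + 1 : ℕ) := by push_cast; rfl
  obtain ⟨k, hk⟩ := Int.eq_ofNat_of_zero_le (sub_nonneg.mpr hxy)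
  rw [abs_sub_comm (β x : ℤ), abs_of_nonneg (sub_nonneg.mpr hxy), hk]
  exact step k y (by omega)

end IsContraction

theorem exists_isContraction_comp_eq_of_ker_le {n : ℕ} {α β : Fin n → Fin n}
    (hα : IsContraction α) (hβ : IsContraction β) (hker : ∀ x y, β x = β y → α x = α y) :
    ∃ u : Fin n → Fin n, IsContraction u ∧ α = u ∘ β := by
  obtain ⟨s, hs, hsβ⟩ := hβ.exists_section
  exact ⟨α ∘ s, fun t t' => (hα.abs_sub_le_abs_sub_of_ker_le hβ hker _ _).trans (hs t t'),
    funext fun x => hker _ _ (congrFun hsβ x).symm⟩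

/-- Maps act on the right, as in the paper: the product `βu` in `CT_n` is `u ∘ β`. -/
theorem green_R_iff_ker_eq {n : ℕ} (α β : Fin n → Fin n)
    (hα : IsContraction α) (hβ : IsContraction β) :
    ((α = β ∨ ∃ u : Fin n → Fin n, IsContraction u ∧ α = u ∘ β) ∧
     (β = α ∨ ∃ v : Fin n → Fin n, IsContraction v ∧ β = v ∘ α)) ↔
    (∀ x y : Fin n, α x = α y ↔ β x = β y) := by
  constructor
  · rintro ⟨hαβ, hβα⟩ x y
    have ker_le {γ δ : Fin n → Fin n} :
        (γ = δ ∨ ∃ u, IsContraction u ∧ γ = u ∘ δ) → δ x = δ y → γ x = γ y := by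
      rintro (rfl | ⟨u, -, rfl⟩) h
      exacts [h, congrArg u h]
    exact ⟨ker_le hβα, ker_le hαβ⟩
  · intro h
    exact ⟨.inr (exists_isContraction_comp_eq_of_ker_le hα hβ fun x y => (h x y).2),
      .inr (exists_isContraction_comp_eq_of_ker_le hβ hα fun x y => (h x y).1)⟩
end

section
/- For every full contraction α of [n], there exists an idempotent full contraction γ of [n] with im γ = im α. Consequently, every L*-class of the semigroup CT_n contains an idempotent, i.e., CT_n is left abundant. -/
theorem exists_apply_eq_of_succ_le_add_one {f : ℕ → ℤ} {m : ℕ}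
    (hf : ∀ k < m, f (k + 1) ≤ f k + 1) {c : ℤ} (h0 : f 0 ≤ c) (hm : c ≤ f m) :
    ∃ k ≤ m, f k = c := by
  induction m with
  | zero => exact ⟨0, le_rfl, le_antisymm h0 hm⟩
  | succ m ih =>
    by_cases hc : c ≤ f m
    · obtain ⟨k, hkm, hk⟩ := ih (fun k hk => hf k (by omega)) hc
      exact ⟨k, by omega, hk⟩
    · exact ⟨m + 1, le_rfl, by linarith [hf m (by omega)]⟩

theorem exists_apply_eq_of_abs_succ_sub_le_one {f : ℕ → ℤ} {m : ℕ}
    (hf : ∀ k < m, |f (k + 1) - f k| ≤ 1) {c : ℤ} (hc : c ∈ Set.uIcc (f 0) (f m)) :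
    ∃ k ≤ m, f k = c := by
  have hf' := fun k hk => abs_le.mp (hf k hk)
  rcases Set.mem_uIcc.mp hc with ⟨h0, hm⟩ | ⟨hm, h0⟩
  · exact exists_apply_eq_of_succ_le_add_one (fun k hk => by linarith [hf' k hk]) h0 hm
  · obtain ⟨k, hkm, hk⟩ := exists_apply_eq_of_succ_le_add_one (f := fun k => -f k) (c := -c)
      (fun k hk => by linarith [hf' k hk]) (neg_le_neg h0) (neg_le_neg hm)
    exact ⟨k, hkm, neg_inj.mp hk⟩

namespace IsContraction

variable {n : ℕ} {α : Fin n → Fin n}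

theorem exists_apply_eq_of_mem_uIcc (hα : IsContraction α) {i j : Fin n} (hij : i ≤ j)
    {c : Fin n} (hc : c ∈ Set.uIcc (α i) (α j)) : ∃ k, α k = c := by
  let p : ℕ → Fin n := fun k => ⟨min (i + k) j, by omega⟩
  have hp0 : p 0 = i := Fin.ext (by simpa [p] using hij)
  have hpm : p (j - i : ℕ) = j := Fin.ext (by simp [p]; omega)
  have hpstep (k : ℕ) : |((p (k + 1) : ℕ) : ℤ) - ((p k : ℕ) : ℤ)| ≤ 1 := by
    simp only [p]; rw [abs_le]; omega
  have hc' : ((c : ℕ) : ℤ) ∈ Set.uIcc ((α (p 0) : ℕ) : ℤ) ((α (p (j - i : ℕ)) : ℕ) : ℤ) := by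
    rw [hp0, hpm]
    simp only [Set.mem_uIcc, Fin.le_def] at hc ⊢
    omega
  obtain ⟨k, -, hk⟩ :=
    exists_apply_eq_of_abs_succ_sub_le_one (f := fun k => ((α (p k) : ℕ) : ℤ))
      (fun k _ => (hα (p (k + 1)) (p k)).trans (hpstep k)) hc'
  exact ⟨p k, Fin.ext (Int.ofNat_inj.mp hk)⟩

theorem ordConnected_range_s9 (hα : IsContraction α) : (Set.range α).OrdConnected := by
  refine ⟨?_⟩
  rintro _ ⟨i, rfl⟩ _ ⟨j, rfl⟩ c hc
  rcases le_total i j with hij | hji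
  · exact hα.exists_apply_eq_of_mem_uIcc hij (Set.Icc_subset_uIcc hc)
  · exact hα.exists_apply_eq_of_mem_uIcc hji (Set.Icc_subset_uIcc' hc)

end IsContraction

theorem isContraction_projIcc {n : ℕ} (a b : Fin n) (h : a ≤ b) :
    IsContraction fun x => (Set.projIcc a b h x : Fin n) := by
  intro x y
  simp only [Set.coe_projIcc, Fin.coe_max, Fin.coe_min]
  rw [abs_le]
  constructor <;> cases abs_cases ((x : ℤ) - y) <;> omega

theorem Set.range_coe_projIcc {β : Type*} [LinearOrder β] {a b : β} (h : a ≤ b) :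
    Set.range (fun x => (Set.projIcc a b h x : β)) = Set.Icc a b := by
  rw [Set.range_comp' Subtype.val, Set.range_projIcc, Set.image_univ, Subtype.range_coe]

theorem Set.OrdConnected.range_eq_Icc {ι β : Type*} [LinearOrder β] {f : ι → β}
    (hf : (Set.range f).OrdConnected) {i j : ι} (hi : ∀ x, f i ≤ f x) (hj : ∀ x, f x ≤ f j) :
    Set.range f = Set.Icc (f i) (f j) :=
  Set.Subset.antisymm (Set.range_subset_iff.mpr fun x => ⟨hi x, hj x⟩)
    (hf.out (Set.mem_range_self i) (Set.mem_range_self j))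

/-- Every full contraction has an idempotent full contraction with the same image;
hence every `L*`-class of `CT_n` (characterized by equality of images) contains an
idempotent, i.e. `CT_n` is left abundant. -/
theorem left_abundant {n : ℕ} (α : Fin n → Fin n) (hα : IsContraction α) :
    ∃ γ : Fin n → Fin n, IsContraction γ ∧ γ ∘ γ = γ ∧
      Set.range γ = Set.range α := by
  cases isEmpty_or_nonempty (Fin n)
  · exact ⟨α, hα, funext isEmptyElim, rfl⟩
  obtain ⟨i, hi⟩ := Finite.exists_min α
  obtain ⟨j, hj⟩ := Finite.exists_max α
  have hij : α i ≤ α j := hi j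
  refine ⟨fun x => Set.projIcc (α i) (α j) hij x, isContraction_projIcc _ _ hij,
    funext fun x => congrArg Subtype.val (Set.projIcc_val hij _), ?_⟩
  rw [Set.range_coe_projIcc, hα.ordConnected_range_s9.range_eq_Icc hi hj]
end

section
/- In the regular part of the semigroup ORCT_n of order-preserving or order-reversing full contractions of [n], every L-class contains exactly one idempotent (Reg(ORCT_n) is L-unipotent): if two idempotents ε, ε' of Reg(ORCT_n) are L-related (generate the same principal left ideal), then ε = ε'. -/
/-- Membership in `ORCT_n`: a full contraction that is order preserving or
order reversing. -/
def InORCT {n : ℕ} (α : Fin n → Fin n) : Prop :=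
  IsContraction α ∧ (Monotone α ∨ Antitone α)

/-- Membership in `Reg(ORCT_n)`: a regular element of `ORCT_n`
(products read left-to-right: `αβα = α ∘ β ∘ α`). -/
def InRegORCT {n : ℕ} (α : Fin n → Fin n) : Prop :=
  InORCT α ∧ ∃ β : Fin n → Fin n, InORCT β ∧ α ∘ β ∘ α = α

open Function

theorem Antitone.le_of_isFixedPt_of_le {α : Type*} [Preorder α] {f : α → α} (hf : Antitone f)
    {a b : α} (ha : IsFixedPt f a) (hb : IsFixedPt f b) (hab : a ≤ b) : b ≤ a := by
  simpa only [ha.eq, hb.eq] using hf hab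

theorem apply_le_of_monotone_of_isContraction {n : ℕ} {e f : Fin n → Fin n}
    (he : Monotone e) (hf : Monotone f) (hfc : IsContraction f)
    (hfe : f ∘ e = e) (hef : e ∘ f = f) (x : Fin n) : f x ≤ e x := by
  have hfe' : ∀ y, f (e y) = e y := congrFun hfe
  have hef' : ∀ y, e (f y) = f y := congrFun hef
  by_contra! hlt
  have hex : e x < x := by
    by_contra! h
    exact (hfe' x ▸ hf h).not_gt hlt
  have hxf : x < f x := by
    by_contra! h
    exact (hef' x ▸ he h).not_gt hlt
  have hdist := hfc x (e x)
  rw [hfe' x, abs_of_pos (by omega), abs_of_pos (by omega)] at hdist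
  omega

theorem apply_le_of_comp_eq_of_comp_eq {n : ℕ} {e f : Fin n → Fin n}
    (he : InORCT e) (hf : InORCT f) (hfe : f ∘ e = e) (hef : e ∘ f = f) (x : Fin n) :
    f x ≤ e x := by
  have hfe' : ∀ y, f (e y) = e y := congrFun hfe
  have hef' : ∀ y, e (f y) = f y := congrFun hef
  -- `e x` and `f x` lie in the common image, fixed by both maps.
  have hee : IsFixedPt e (e x) := by rw [IsFixedPt, ← hfe' x, hef']
  have hff : IsFixedPt f (f x) := by rw [IsFixedPt, ← hef' x, hfe']
  obtain ⟨-, he_mono | he_anti⟩ := he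
  · obtain ⟨hfc, hf_mono | hf_anti⟩ := hf
    · exact apply_le_of_monotone_of_isContraction he_mono hf_mono hfc hfe hef x
    · exact (le_total (e x) (f x)).elim (hf_anti.le_of_isFixedPt_of_le (hfe' x) hff) id
  · exact (le_total (e x) (f x)).elim (he_anti.le_of_isFixedPt_of_le hee (hef' x)) id

/-- `Reg(ORCT_n)` is `L`-unipotent: two `L`-related idempotents coincide.
`ε L ε'` means `ε = ε'` or `ε = uε'` and `ε' = vε` for some `u, v` in the
semigroup; the product `uε'` (apply `u` then `ε'`) is `ε' ∘ u` as functions. -/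
theorem Reg_ORCT_L_unipotent {n : ℕ} (ε ε' : Fin n → Fin n)
    (hε : InRegORCT ε) (hεid : ε ∘ ε = ε)
    (hε' : InRegORCT ε') (hε'id : ε' ∘ ε' = ε')
    (hL : (ε = ε' ∨ ∃ u : Fin n → Fin n, InRegORCT u ∧ ε = ε' ∘ u) ∧
          (ε' = ε ∨ ∃ v : Fin n → Fin n, InRegORCT v ∧ ε' = ε ∘ v)) :
    ε = ε' := by
  obtain h | ⟨u, -, hu⟩ := hL.1
  · exact h
  obtain h | ⟨v, -, hv⟩ := hL.2
  · exact h.symm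
  have hε'ε : ε' ∘ ε = ε := by rw [hu, ← comp_assoc, hε'id]
  have hεε' : ε ∘ ε' = ε' := by rw [hv, ← comp_assoc, hεid]
  funext x
  exact le_antisymm (apply_le_of_comp_eq_of_comp_eq hε'.1 hε.1 hεε' hε'ε x)
    (apply_le_of_comp_eq_of_comp_eq hε.1 hε'.1 hε'ε hεε' x)
end

section
/- If two idempotent full contractions e, f of [n] are R-related in any containing semigroup (i.e., ef = f and fe = e), then ker e = ker f; combined with both being idempotent order-preserving contractions with the same kernel and same image size p ≥ 2 whose kernel classes are intervals with all middle classes singletons, it follows e = f. Hence each R-class of the Rees quotient Q_p(n) = K(n,p)/K(n,p−1), for p ≥ 2, contains a unique idempotent. -/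
theorem apply_eq_apply_iff_of_comp_eq {α : Type*} {e f : α → α}
    (hfe : f ∘ e = f) (hef : e ∘ f = e) (x y : α) : e x = e y ↔ f x = f y :=
  ⟨fun h => by rw [← hfe]; exact congrArg f h, fun h => by rw [← hef]; exact congrArg e h⟩

namespace IsContraction

variable {n : ℕ} {g : Fin n → Fin n}

theorem val_le_val_add_one (hg : IsContraction g) {i j : Fin n}
    (hij : (i : ℕ) = j + 1) : (g i : ℕ) ≤ g j + 1 := by
  have h := hg i j
  rw [show |(i : ℤ) - j| = 1 by simp [hij], abs_le] at h
  omega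

theorem exists_val_eq_add_one (hg : IsContraction g) (hmono : Monotone g) {x y : Fin n}
    (h : g x < g y) : ∃ z, (g z : ℕ) = g x + 1 := by
  classical
  obtain ⟨m, hmS, hmin⟩ := (Finset.univ.filter fun z => g x < g z).exists_min_image id
    ⟨y, by simp [h]⟩
  have hm : g x < g m := (Finset.mem_filter.1 hmS).2
  have hxm : (x : ℕ) < m := hmono.reflect_lt hm
  let m' : Fin n := ⟨m - 1, by omega⟩
  have hm'm : (m : ℕ) = m' + 1 := by simp only [m']; omega
  have hm' : ¬ g x < g m' := fun h' =>
    (hmin m' (by simp [h'])).not_gt (show m' < m from Fin.lt_def.2 (by omega))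
  have := hg.val_le_val_add_one hm'm
  exact ⟨m, by rw [Fin.lt_def] at hm hm'; omega⟩

theorem exists_val_add_one_eq (hg : IsContraction g) (hmono : Monotone g) {x y : Fin n}
    (h : g y < g x) : ∃ z, (g z : ℕ) + 1 = g x := by
  classical
  obtain ⟨m, hmS, hmax⟩ := (Finset.univ.filter fun z => g z < g x).exists_max_image id
    ⟨y, by simp [h]⟩
  have hm : g m < g x := (Finset.mem_filter.1 hmS).2
  have hmx : (m : ℕ) < x := hmono.reflect_lt hm
  let m' : Fin n := ⟨m + 1, by omega⟩
  have hm'm : (m' : ℕ) = m + 1 := rfl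
  have hm' : ¬ g m' < g x := fun h' =>
    (hmax m' (by simp [h'])).not_gt (show m < m' from Fin.lt_def.2 (by omega))
  have := hg.val_le_val_add_one hm'm
  exact ⟨m, by rw [Fin.lt_def] at hm hm'; omega⟩

end IsContraction

theorem apply_le_of_apply_eq_apply_iff {n : ℕ} {e f : Fin n → Fin n}
    (hce : IsContraction e) (hcf : IsContraction f) (hme : Monotone e) (hmf : Monotone f)
    (hee : e ∘ e = e) (hff : f ∘ f = f) (hker : ∀ x y : Fin n, e x = e y ↔ f x = f y)
    (hrange : (Set.range e).Nontrivial) (x : Fin n) : f x ≤ e x := by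
  by_contra! hlt
  have he (z : Fin n) : e (e z) = e z := congrFun hee z
  have hf (z : Fin n) : f (f z) = f z := congrFun hff z
  have hefx : e (f x) = e x := (hker _ _).2 (hf x)
  have hfex : f (e x) = f x := (hker _ _).1 (he x)
  have hclass : ∀ z, e x ≤ z → z ≤ f x → e z = e x ∧ f z = f x := fun z h₁ h₂ =>
    ⟨le_antisymm (hefx ▸ hme h₂) (he x ▸ hme h₁), le_antisymm (hf x ▸ hmf h₂) (hfex ▸ hmf h₁)⟩
  obtain ⟨_, ⟨y, rfl⟩, hy⟩ := hrange.exists_ne (e x)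
  rcases hy.lt_or_gt with hyx | hxy
  · have hfyx : f y < f x := lt_of_le_of_ne (hmf (hme.reflect_lt hyx).le)
      (fun h => hy ((hker _ _).2 h))
    obtain ⟨z, hz⟩ := hcf.exists_val_add_one_eq hmf hfyx
    have hfz : f (f z) = f x := (hclass (f z) (Fin.le_def.2 (by omega)) (Fin.le_def.2 (by omega))).2
    rw [hf, Fin.ext_iff] at hfz
    omega
  · obtain ⟨z, hz⟩ := hce.exists_val_eq_add_one hme hxy
    have hez : e (e z) = e x := (hclass (e z) (Fin.le_def.2 (by omega)) (Fin.le_def.2 (by omega))).1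
    rw [he, Fin.ext_iff] at hez
    omega

/-- `R`-related idempotent full contractions (`ef = f` and `fe = e`, with the
product `ef` meaning apply `e` then `f`, i.e. `f ∘ e`) have equal kernels; and
two idempotent order-preserving full contractions with the same kernel and the
same image size `p ≥ 2` coincide.  Hence each `R`-class of the Rees quotient
`Q_p(n)` contains a unique idempotent. -/
theorem R_class_unique_idempotent {n : ℕ} :
    (∀ e f : Fin n → Fin n, IsContraction e → IsContraction f →
      e ∘ e = e → f ∘ f = f → f ∘ e = f → e ∘ f = e →
      ∀ x y : Fin n, e x = e y ↔ f x = f y) ∧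
    (∀ p : ℕ, 2 ≤ p → ∀ e f : Fin n → Fin n,
      IsContraction e → IsContraction f → Monotone e → Monotone f →
      e ∘ e = e → f ∘ f = f →
      Nat.card (Set.range e) = p → Nat.card (Set.range f) = p →
      (∀ x y : Fin n, e x = e y ↔ f x = f y) → e = f) := by
  refine ⟨fun e f _ _ _ _ hfe hef => apply_eq_apply_iff_of_comp_eq hfe hef, ?_⟩
  intro p hp e f hce hcf hme hmf hee hff hcarde hcardf hker
  have nontrivial_range {g : Fin n → Fin n} (hg : Nat.card (Set.range g) = p) :
      (Set.range g).Nontrivial :=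
    Set.nontrivial_coe_sort.1 (Finite.one_lt_card_iff_nontrivial.1 (by omega))
  funext x
  exact le_antisymm
    (apply_le_of_apply_eq_apply_iff hcf hce hmf hme hff hee (fun a b => (hker a b).symm)
      (nontrivial_range hcardf) x)
    (apply_le_of_apply_eq_apply_iff hce hcf hme hmf hee hff hker (nontrivial_range hcarde) x)
end
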